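/- arXiv:2303.15845 — 2 statements merged into one kernel-verified Lean document; each statement's English description precedes it below -/
import Mathlib

section
/- Let n ≥ 1, let P_Y be a probability measure on ℝ^n with differentiable density p_Y satisfying ‖∇p_Y(y)‖ ≤ K for all y and some K > 0, and let ỹ ∈ ℝ^n with p_Y(ỹ) = a > 0. Let (μ_y)_{y∈ℝ^n} be a family of probability measures on ℝ^m with finite first moments, and set k = a/(2K) + ‖ỹ‖. Assume: (i) there is C_k < ∞ with W₁(μ_{y₁}, μ_{y₂}) ≤ C_k‖y₁ − y₂‖ for all ‖y₁‖, ‖y₂‖ ≤ k; (ii) P_Z is a probability measure on ℝ^d and G : ℝ^n × ℝ^d → ℝ^m is such that every pushforward G(y,·)_#P_Z has finite first moment, y ↦ G(y,z) is differentiable with ‖∇_y G(y,z)‖ ≤ L_k for all z ∈ supp(P_Z) and all ‖y‖ ≤ k, for some L_k > 0; (iii) the function y ↦ W₁(μ_y, G(y,·)_#P_Z) is measurable and ∫ W₁(μ_y, G(y,·)_#P_Z) dP_Y(y) ≤ ε for some ε > 0. Then W₁(μ_{ỹ}, G(ỹ,·)_#P_Z) ≤ (L_k + C_k)·a/(2K)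 + 2ε/(S_n (a/(2K))^n a), where S_n = π^{n/2}/Γ(n/2 + 1). -/
/-!
Since `‖∇p_Y‖ ≤ K`, the density stays above `a/2` on the ball `B` of radius `r = a/(2K)` around
`ỹ`, so `P_Y(B) ≥ (a/2) S_n r^n`. As `∫ W₁(μ_y, G(y,·)_#P_Z) dP_Y ≤ ε`, the first moment method
gives a `y ∈ B` with `W₁(μ_y, G(y,·)_#P_Z) ≤ ε / P_Y(B) ≤ 2ε/(S_n r^n a)`. The triangle
inequality for `W₁` (gluing of couplings) then transports this bound from `y` to `ỹ`, paying
`C_k r` on the side of `μ` and `L_k r` on the side of `G`, the latter by coupling `G(y,z)` with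
`G(ỹ,z)` under the same `z`.
-/

open MeasureTheory Filter Topology Matrix

/-- The Wasserstein-1 distance: infimum over couplings of the expected distance. -/
noncomputable def W1 {E : Type*} [MeasurableSpace E] [NormedAddCommGroup E]
    (μ ν : Measure E) : ℝ :=
  (⨅ π ∈ {π : Measure (E × E) |
      π.map Prod.fst = μ ∧ π.map Prod.snd = ν ∧ IsProbabilityMeasure π},
    ∫⁻ p, ‖p.1 - p.2‖₊ ∂π).toReal

/-- A measure has finite first moment. -/
def HasFiniteFirstMoment {E : Type*} [MeasurableSpace E] [NormedAddCommGroup E]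
    (μ : Measure E) : Prop :=
  ∫⁻ x, ‖x‖₊ ∂μ ≠ ⊤

/-- Lebesgue volume of the unit ball in ℝ^n. -/
noncomputable def Sn (n : ℕ) : ℝ := Real.pi ^ ((n : ℝ) / 2) / Real.Gamma ((n : ℝ) / 2 + 1)

/-- The (topological) support of a measure: points all of whose open neighborhoods
have positive measure. -/
def measSupport {E : Type*} [TopologicalSpace E] [MeasurableSpace E]
    (μ : Measure E) : Set E := {x | ∀ U : Set E, IsOpen U → x ∈ U → 0 < μ U}

open ProbabilityTheory Metric
open scoped ENNReal NNReal

/-- Gluing: disintegrate both measures over the common marginal and take the product of the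
conditional kernels. -/
lemma exists_glue_of_snd_eq_fst {α β γ : Type*} [MeasurableSpace α] [MeasurableSpace β]
    [MeasurableSpace γ] [StandardBorelSpace α] [Nonempty α] [StandardBorelSpace γ] [Nonempty γ]
    {π₁₂ : Measure (α × β)} {π₂₃ : Measure (β × γ)} [IsFiniteMeasure π₁₂] [IsFiniteMeasure π₂₃]
    (h : π₁₂.map Prod.snd = π₂₃.map Prod.fst) :
    ∃ T : Measure (β × α × γ),
      T.map (fun q => (q.2.1, q.1)) = π₁₂ ∧ T.map (fun q => (q.1, q.2.2)) = π₂₃ := by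
  set σ := π₁₂.map Prod.swap
  have hσ : π₂₃.fst ⊗ₘ σ.condKernel = σ := by
    have : σ.fst = π₂₃.fst := by
      rw [Measure.fst, Measure.map_map measurable_fst measurable_swap]; exact h
    rw [← this]; exact σ.disintegrate _
  refine ⟨π₂₃.fst ⊗ₘ (σ.condKernel ×ₖ π₂₃.condKernel), ?_, ?_⟩
  · have : (fun q : β × α × γ => (q.2.1, q.1)) = Prod.swap ∘ Prod.map id Prod.fst := rfl
    rw [this, ← Measure.map_map measurable_swap (by fun_prop),
      ← Measure.compProd_map measurable_fst, ← Kernel.fst_eq, Kernel.fst_prod, hσ,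
      Measure.map_map measurable_swap measurable_swap, Prod.swap_swap_eq, Measure.map_id]
  · change Measure.map (Prod.map id Prod.snd) _ = _
    rw [← Measure.compProd_map measurable_snd, ← Kernel.snd_eq, Kernel.snd_prod,
      π₂₃.disintegrate]

section Coupling

variable {E : Type*} [MeasurableSpace E]

def IsCoupling (μ ν : Measure E) (π : Measure (E × E)) : Prop :=
  π.map Prod.fst = μ ∧ π.map Prod.snd = ν ∧ IsProbabilityMeasure π

lemma isCoupling_prod (μ ν : Measure E) [IsProbabilityMeasure μ] [IsProbabilityMeasure ν] :
    IsCoupling μ ν (μ.prod ν) :=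
  ⟨Measure.fst_prod, Measure.snd_prod, inferInstance⟩

lemma isCoupling_map_prodMk {Z : Type*} [MeasurableSpace Z] (P : Measure Z)
    [IsProbabilityMeasure P] {f g : Z → E} (hf : Measurable f) (hg : Measurable g) :
    IsCoupling (P.map f) (P.map g) (P.map fun z => (f z, g z)) :=
  ⟨by rw [Measure.map_map measurable_fst (hf.prodMk hg)]; rfl,
   by rw [Measure.map_map measurable_snd (hf.prodMk hg)]; rfl,
   Measure.isProbabilityMeasure_map (hf.prodMk hg).aemeasurable⟩

end Coupling

section Wasserstein

variable {E : Type*} [MeasurableSpace E] [NormedAddCommGroup E]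

noncomputable def eW1 (μ ν : Measure E) : ℝ≥0∞ :=
  ⨅ π ∈ {π | IsCoupling μ ν π}, ∫⁻ p, ‖p.1 - p.2‖₊ ∂π

lemma W1_eq_toReal_eW1 (μ ν : Measure E) : W1 μ ν = (eW1 μ ν).toReal := rfl

lemma eW1_le_lintegral {μ ν : Measure E} {π : Measure (E × E)} (hπ : IsCoupling μ ν π) :
    eW1 μ ν ≤ ∫⁻ p, ‖p.1 - p.2‖₊ ∂π :=
  iInf₂_le π hπ

variable [BorelSpace E]

lemma lintegral_nnnorm_sub_ne_top {μ ν : Measure E} {π : Measure (E × E)}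
    (hπ : IsCoupling μ ν π) (hμ : HasFiniteFirstMoment μ) (hν : HasFiniteFirstMoment ν) :
    ∫⁻ p, (‖p.1 - p.2‖₊ : ℝ≥0∞) ∂π ≠ ⊤ := by
  obtain ⟨h₁, h₂, -⟩ := hπ
  refine ne_top_of_le_ne_top ?_ (lintegral_mono fun p =>
    (by exact_mod_cast nnnorm_sub_le p.1 p.2 : (‖p.1 - p.2‖₊ : ℝ≥0∞) ≤ ‖p.1‖₊ + ‖p.2‖₊))
  rw [lintegral_add_left (by fun_prop),
    ← lintegral_map (f := fun x => (‖x‖₊ : ℝ≥0∞)) (by fun_prop) measurable_fst,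
    ← lintegral_map (f := fun x => (‖x‖₊ : ℝ≥0∞)) (by fun_prop) measurable_snd, h₁, h₂]
  exact ENNReal.add_ne_top.2 ⟨hμ, hν⟩

lemma eW1_ne_top {μ ν : Measure E} [IsProbabilityMeasure μ] [IsProbabilityMeasure ν]
    (hμ : HasFiniteFirstMoment μ) (hν : HasFiniteFirstMoment ν) : eW1 μ ν ≠ ⊤ :=
  ne_top_of_le_ne_top (lintegral_nnnorm_sub_ne_top (isCoupling_prod μ ν) hμ hν)
    (eW1_le_lintegral (isCoupling_prod μ ν))

variable [SecondCountableTopology E]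

lemma eW1_triangle [StandardBorelSpace E] (μ ν ρ : Measure E) :
    eW1 μ ρ ≤ eW1 μ ν + eW1 ν ρ := by
  conv_rhs => rw [eW1, eW1, iInf_subtype', iInf_subtype', ENNReal.iInf_add]
  refine le_iInf fun ⟨π₁₂, h₁₂f, h₁₂s, h₁₂p⟩ => ?_
  rw [ENNReal.add_iInf]
  refine le_iInf fun ⟨π₂₃, h₂₃f, h₂₃s, h₂₃p⟩ => ?_
  obtain ⟨T, hT₁₂, hT₂₃⟩ := exists_glue_of_snd_eq_fst (h₁₂s.trans h₂₃f.symm)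
  have hT : IsProbabilityMeasure T := by
    rw [← hT₁₂] at h₁₂p
    exact Measure.isProbabilityMeasure_of_map fun q : E × E × E => (q.2.1, q.1)
  have hcost : Measurable fun p : E × E => (‖p.1 - p.2‖₊ : ℝ≥0∞) := by fun_prop
  have hM : IsCoupling μ ρ (T.map Prod.snd) := by
    refine ⟨?_, ?_, ?_⟩
    · rw [← h₁₂f, ← hT₁₂, Measure.map_map, Measure.map_map] <;> first | rfl | fun_prop
    · rw [← h₂₃s, ← hT₂₃, Measure.map_map, Measure.map_map] <;> first | rfl | fun_prop
    · exact Measure.isProbabilityMeasure_map (by fun_prop)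
  refine (eW1_le_lintegral hM).trans ?_
  calc ∫⁻ p, ‖p.1 - p.2‖₊ ∂(T.map Prod.snd)
      = ∫⁻ q, ‖q.2.1 - q.2.2‖₊ ∂T := lintegral_map hcost measurable_snd
    _ ≤ ∫⁻ q, ((‖q.2.1 - q.1‖₊ : ℝ≥0∞) + ‖q.1 - q.2.2‖₊) ∂T := lintegral_mono fun q => by
        simpa only [nndist_eq_nnnorm, ENNReal.coe_add] using
          ENNReal.coe_le_coe.2 (nndist_triangle q.2.1 q.1 q.2.2)
    _ = ∫⁻ p, ‖p.1 - p.2‖₊ ∂π₁₂ + ∫⁻ p, ‖p.1 - p.2‖₊ ∂π₂₃ := by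
        rw [lintegral_add_left (by fun_prop), ← hT₁₂, ← hT₂₃, lintegral_map hcost (by fun_prop),
          lintegral_map hcost (by fun_prop)]

lemma W1_triangle [StandardBorelSpace E] {μ ν ρ : Measure E} [IsProbabilityMeasure μ]
    [IsProbabilityMeasure ν] [IsProbabilityMeasure ρ] (hμ : HasFiniteFirstMoment μ)
    (hν : HasFiniteFirstMoment ν) (hρ : HasFiniteFirstMoment ρ) :
    W1 μ ρ ≤ W1 μ ν + W1 ν ρ := by
  simp only [W1_eq_toReal_eW1]
  rw [← ENNReal.toReal_add (eW1_ne_top hμ hν) (eW1_ne_top hν hρ)]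
  exact ENNReal.toReal_mono (ENNReal.add_ne_top.2 ⟨eW1_ne_top hμ hν, eW1_ne_top hν hρ⟩)
    (eW1_triangle μ ν ρ)

lemma W1_map_le_of_ae_norm_sub_le {Z : Type*} [MeasurableSpace Z] (P : Measure Z)
    [IsProbabilityMeasure P] {f g : Z → E} (hf : Measurable f) (hg : Measurable g) {L : ℝ}
    (h : ∀ᵐ z ∂P, ‖f z - g z‖ ≤ L) : W1 (P.map f) (P.map g) ≤ L := by
  obtain ⟨z, hz⟩ := h.exists
  refine ENNReal.toReal_le_of_le_ofReal ((norm_nonneg _).trans hz) ?_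
  calc eW1 (P.map f) (P.map g) ≤ ∫⁻ z, ‖f z - g z‖₊ ∂P := by
        refine (eW1_le_lintegral (isCoupling_map_prodMk P hf hg)).trans_eq ?_
        rw [lintegral_map (by fun_prop) (hf.prodMk hg)]
    _ ≤ ∫⁻ _, ENNReal.ofReal L ∂P := lintegral_mono_ae <| h.mono fun z hz => by
        rw [← ENNReal.ofReal_coe_nnreal, coe_nnnorm]
        exact ENNReal.ofReal_le_ofReal hz
    _ = ENNReal.ofReal L := by simp

end Wasserstein

lemma nonneg_of_W1_le_mul_norm_sub {F E : Type*} [NormedAddCommGroup F] [NormedSpace ℝ F]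
    [Nontrivial F] [MeasurableSpace E] [NormedAddCommGroup E] {μ : F → Measure E} {k C : ℝ}
    (hk : 0 < k) (h : ∀ y₁ y₂ : F, ‖y₁‖ ≤ k → ‖y₂‖ ≤ k → W1 (μ y₁) (μ y₂) ≤ C * ‖y₁ - y₂‖) :
    0 ≤ C := by
  obtain ⟨y, hy⟩ := exists_norm_eq F hk.le
  have := h y 0 hy.le (by simpa using hk.le)
  rw [sub_zero, hy] at this
  exact nonneg_of_mul_nonneg_left (ENNReal.toReal_nonneg.trans this) hk

lemma measSupport_eq_support {X : Type*} [TopologicalSpace X] [MeasurableSpace X]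
    (μ : Measure X) : measSupport μ = μ.support := by
  ext x
  simp only [measSupport, Measure.support_eq_forall_isOpen, Set.mem_ofPred_eq]
  exact forall_congr' fun U => imp.swap

lemma ae_mem_measSupport {X : Type*} [TopologicalSpace X] [MeasurableSpace X]
    [HereditarilyLindelofSpace X] (μ : Measure X) : ∀ᵐ x ∂μ, x ∈ measSupport μ := by
  rw [measSupport_eq_support]
  exact Measure.support_mem_ae

section MeanValue

variable {E F : Type*} [NormedAddCommGroup E] [NormedSpace ℝ E] [NormedAddCommGroup F]
  [NormedSpace ℝ F]

lemma norm_sub_le_of_forall_norm_le_hasFDerivAt {f : E → F} {f' : E → E →L[ℝ] F} {k L : ℝ}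
    (hf : ∀ y, ‖y‖ ≤ k → HasFDerivAt f (f' y) y ∧ ‖f' y‖ ≤ L) {x y : E} (hx : ‖x‖ ≤ k)
    (hy : ‖y‖ ≤ k) : ‖f y - f x‖ ≤ L * ‖y - x‖ :=
  (convex_closedBall 0 k).norm_image_sub_le_of_norm_hasFDerivWithin_le
    (fun z hz => (hf z (mem_closedBall_zero_iff.1 hz)).1.hasFDerivWithinAt)
    (fun z hz => (hf z (mem_closedBall_zero_iff.1 hz)).2)
    (mem_closedBall_zero_iff.2 hx) (mem_closedBall_zero_iff.2 hy)

lemma sub_mul_le_of_norm_fderiv_le {f : E → ℝ} {f' : E → E →L[ℝ] ℝ} {K r : ℝ}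
    (hf : ∀ y, HasFDerivAt f (f' y) y) (hK : ∀ y, ‖f' y‖ ≤ K) {x y : E}
    (hy : y ∈ closedBall x r) : f x - K * r ≤ f y := by
  have hK0 : 0 ≤ K := (norm_nonneg _).trans (hK x)
  have hxy : |f y - f x| ≤ K * ‖y - x‖ :=
    convex_univ.norm_image_sub_le_of_norm_hasFDerivWithin_le
      (fun z _ => (hf z).hasFDerivWithinAt) (fun z _ => hK z) (Set.mem_univ x) (Set.mem_univ y)
  have hKr : K * ‖y - x‖ ≤ K * r := mul_le_mul_of_nonneg_left (mem_closedBall_iff_norm.1 hy) hK0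
  linarith [neg_abs_le (f y - f x)]

end MeanValue

lemma Sn_pos (n : ℕ) : 0 < Sn n :=
  div_pos (Real.rpow_pos_of_pos Real.pi_pos _) (Real.Gamma_pos_of_pos (by positivity))

lemma volume_closedBall_eq_Sn {n : ℕ} [NeZero n] (x : EuclideanSpace ℝ (Fin n)) {r : ℝ}
    (hr : 0 ≤ r) : volume (closedBall x r) = ENNReal.ofReal (Sn n * r ^ n) := by
  have hπ : √Real.pi ^ n = Real.pi ^ ((n : ℝ) / 2) := by
    rw [Real.sqrt_eq_rpow, ← Real.rpow_natCast, ← Real.rpow_mul Real.pi_pos.le]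
    ring_nf
  rw [EuclideanSpace.volume_closedBall, Fintype.card_fin, ← ENNReal.ofReal_pow hr,
    ← ENNReal.ofReal_mul (by positivity), Sn, hπ, mul_comm, div_mul_eq_mul_div]

lemma ofReal_mul_Sn_le_withDensity_closedBall {n : ℕ} [NeZero n]
    {p : EuclideanSpace ℝ (Fin n) → ℝ}
    {p' : EuclideanSpace ℝ (Fin n) → EuclideanSpace ℝ (Fin n) →L[ℝ] ℝ} {K : ℝ}
    (hp : ∀ y, HasFDerivAt p (p' y) y) (hK : ∀ y, ‖p' y‖ ≤ K)
    (x : EuclideanSpace ℝ (Fin n)) {r : ℝ} (hr : 0 ≤ r) :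
    ENNReal.ofReal ((p x - K * r) * (Sn n * r ^ n)) ≤
      volume.withDensity (fun y => ENNReal.ofReal (p y)) (closedBall x r) := by
  have hpm : Measurable p :=
    (continuous_iff_continuousAt.2 fun y => (hp y).continuousAt).measurable
  rw [withDensity_apply _ measurableSet_closedBall,
    ENNReal.ofReal_mul' (by positivity [Sn_pos n]), ← volume_closedBall_eq_Sn x hr,
    ← setLIntegral_const]
  exact setLIntegral_mono hpm.ennreal_ofReal fun y hy =>
    ENNReal.ofReal_le_ofReal (sub_mul_le_of_norm_fderiv_le hp hK hy)

lemma exists_mem_le_of_lintegral_le_mul {α : Type*} [MeasurableSpace α] {μ : Measure α}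
    {f : α → ℝ≥0∞} (hf : AEMeasurable f μ) {s : Set α} (hs : μ s ≠ 0) (hs' : μ s ≠ ⊤)
    {c : ℝ≥0∞} (h : ∫⁻ x, f x ∂μ ≤ c * μ s) : ∃ x ∈ s, f x ≤ c := by
  obtain ⟨x, hx, hfx⟩ := exists_le_setLAverage hs hs' hf.restrict
  refine ⟨x, hx, hfx.trans ?_⟩
  rw [setLAverage_eq]
  exact ENNReal.div_le_of_le_mul (setLIntegral_le_lintegral s f |>.trans h)

lemma exists_mem_closedBall_le_of_lintegral_le {n : ℕ} [NeZero n]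
    {p : EuclideanSpace ℝ (Fin n) → ℝ}
    {p' : EuclideanSpace ℝ (Fin n) → EuclideanSpace ℝ (Fin n) →L[ℝ] ℝ} {K : ℝ} (hK : 0 < K)
    (hp : ∀ y, HasFDerivAt p (p' y) y) (hp' : ∀ y, ‖p' y‖ ≤ K)
    (P : Measure (EuclideanSpace ℝ (Fin n))) [IsFiniteMeasure P]
    (hP : P = volume.withDensity (fun y => ENNReal.ofReal (p y)))
    {x : EuclideanSpace ℝ (Fin n)} {a : ℝ} (ha : 0 < a) (hpx : p x = a)
    {f : EuclideanSpace ℝ (Fin n) → ℝ} (hf : Measurable f) {ε : ℝ} (hε : 0 < ε)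
    (hint : ∫⁻ y, ENNReal.ofReal (f y) ∂P ≤ ENNReal.ofReal ε) :
    ∃ y ∈ closedBall x (a / (2 * K)), f y ≤ 2 * ε / (Sn n * (a / (2 * K)) ^ n * a) := by
  set r := a / (2 * K) with hr
  set c := 2 * ε / (Sn n * r ^ n * a) with hc
  have hr0 : 0 < r := by positivity
  have hc0 : 0 < c := by positivity [Sn_pos n]
  have hball : ENNReal.ofReal ε ≤ ENNReal.ofReal c * P (closedBall x r) := by
    have h := ofReal_mul_Sn_le_withDensity_closedBall hp hp' x hr0.le
    rw [hpx, ← hP] at h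
    calc ENNReal.ofReal ε = ENNReal.ofReal c * ENNReal.ofReal ((a - K * r) * (Sn n * r ^ n)) := by
          rw [← ENNReal.ofReal_mul hc0.le, hc, hr]
          field_simp [(Sn_pos n).ne']
          ring_nf
      _ ≤ ENNReal.ofReal c * P (closedBall x r) := by gcongr
  have hpos : P (closedBall x r) ≠ 0 := by
    intro h0
    rw [h0, mul_zero, nonpos_iff_eq_zero, ENNReal.ofReal_eq_zero] at hball
    linarith
  obtain ⟨y, hy, h⟩ := exists_mem_le_of_lintegral_le_mul hf.ennreal_ofReal.aemeasurable
    hpos (measure_ne_top _ _) (hint.trans hball)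
  exact ⟨y, hy, (ENNReal.ofReal_le_ofReal_iff hc0.le).1 h⟩

/-- pointwise Wasserstein bound without the dimension scaling. -/
theorem stmt_8 {n m d : ℕ} (hn : 1 ≤ n)
    (pY : EuclideanSpace ℝ (Fin n) → ℝ)
    (PY : Measure (EuclideanSpace ℝ (Fin n)))
    (hPYprob : IsProbabilityMeasure PY)
    (hPY : PY = volume.withDensity (fun y => ENNReal.ofReal (pY y)))
    (K : ℝ) (hK : 0 < K)
    (DY : EuclideanSpace ℝ (Fin n) → (EuclideanSpace ℝ (Fin n) →L[ℝ] ℝ))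
    (hderivY : ∀ y, HasFDerivAt pY (DY y) y)
    (hDYbound : ∀ y, ‖DY y‖ ≤ K)
    (ytil : EuclideanSpace ℝ (Fin n)) (a : ℝ) (ha : 0 < a) (hpa : pY ytil = a)
    (μ : EuclideanSpace ℝ (Fin n) → Measure (EuclideanSpace ℝ (Fin m)))
    (hμprob : ∀ y, IsProbabilityMeasure (μ y))
    (hμmom : ∀ y, HasFiniteFirstMoment (μ y))
    (k : ℝ) (hk : k = a / (2 * K) + ‖ytil‖)
    (Ck : ℝ)
    (hCk : ∀ y₁ y₂ : EuclideanSpace ℝ (Fin n), ‖y₁‖ ≤ k → ‖y₂‖ ≤ k →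
      W1 (μ y₁) (μ y₂) ≤ Ck * ‖y₁ - y₂‖)
    (PZ : Measure (EuclideanSpace ℝ (Fin d))) (hPZprob : IsProbabilityMeasure PZ)
    (G : EuclideanSpace ℝ (Fin n) → EuclideanSpace ℝ (Fin d) → EuclideanSpace ℝ (Fin m))
    (hGmeas : ∀ y : EuclideanSpace ℝ (Fin n), Measurable (G y))
    (hGmom : ∀ y : EuclideanSpace ℝ (Fin n), HasFiniteFirstMoment (PZ.map (G y)))
    (Lk : ℝ) (hLk : 0 < Lk)
    (DG : EuclideanSpace ℝ (Fin n) → EuclideanSpace ℝ (Fin d) →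
      (EuclideanSpace ℝ (Fin n) →L[ℝ] EuclideanSpace ℝ (Fin m)))
    (hderivG : ∀ z ∈ measSupport PZ, ∀ y : EuclideanSpace ℝ (Fin n), ‖y‖ ≤ k →
      HasFDerivAt (fun y' => G y' z) (DG y z) y ∧ ‖DG y z‖ ≤ Lk)
    (hWmeas : Measurable fun y => W1 (μ y) (PZ.map (G y)))
    (ε : ℝ) (hε0 : 0 < ε)
    (hint : ∫⁻ y, ENNReal.ofReal (W1 (μ y) (PZ.map (G y))) ∂PY ≤ ENNReal.ofReal ε) :
    W1 (μ ytil) (PZ.map (G ytil)) ≤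
      (Lk + Ck) * (a / (2 * K)) + 2 * ε / (Sn n * (a / (2 * K)) ^ n * a) := by
  have : NeZero n := ⟨by omega⟩
  set r := a / (2 * K)
  obtain ⟨y, hy, hWy⟩ := exists_mem_closedBall_le_of_lintegral_le hK hderivY hDYbound PY hPY ha
    hpa hWmeas hε0 hint
  set c := 2 * ε / (Sn n * r ^ n * a)
  have hdist : ‖y - ytil‖ ≤ r := mem_closedBall_iff_norm.1 hy
  have hr0 : 0 ≤ r := (norm_nonneg _).trans hdist
  have hytil : ‖ytil‖ ≤ k := by linarith
  have hyk : ‖y‖ ≤ k := by linarith [norm_le_norm_add_norm_sub' y ytil]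
  have hCk0 : 0 ≤ Ck := nonneg_of_W1_le_mul_norm_sub (by rw [hk]; positivity) hCk
  have hμy : W1 (μ ytil) (μ y) ≤ Ck * r :=
    (hCk ytil y hytil hyk).trans (by rw [norm_sub_rev]; gcongr)
  have hGy : W1 (PZ.map (G y)) (PZ.map (G ytil)) ≤ Lk * r :=
    W1_map_le_of_ae_norm_sub_le PZ (hGmeas y) (hGmeas ytil) <|
      (ae_mem_measSupport PZ).mono fun z hz =>
        (norm_sub_le_of_forall_norm_le_hasFDerivAt (hderivG z hz) hytil hyk).trans (by gcongr)
  have hGprob y : IsProbabilityMeasure (PZ.map (G y)) :=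
    Measure.isProbabilityMeasure_map (hGmeas y).aemeasurable
  calc W1 (μ ytil) (PZ.map (G ytil))
      ≤ W1 (μ ytil) (μ y) + (W1 (μ y) (PZ.map (G y)) + W1 (PZ.map (G y)) (PZ.map (G ytil))) :=
        (W1_triangle (hμmom ytil) (hμmom y) (hGmom ytil)).trans
          (add_le_add le_rfl (W1_triangle (hμmom y) (hGmom y) (hGmom ytil)))
    _ ≤ Ck * r + (c + Lk * r) := by gcongr
    _ = (Lk + Ck) * r + c := by ring
end

section
/- Let n ≥ 1, let P_Y be a probability measure on ℝ^n with differentiable density p_Y satisfying ‖∇p_Y(y)‖ ≤ K for all y and some K > 0. Let (μ_y)_{y∈ℝ^n} be a family of probability measures on ℝ^m with finite first moments such that for every r > 0 there is C_r < ∞ with W₁(μ_{y₁}, μ_{y₂}) ≤ C_r‖y₁ − y₂‖ whenever ‖y₁‖, ‖y₂‖ ≤ r. Let P_Z be a probability measure on ℝ^d and let (G^ε)_{ε>0} be a family of maps G^ε : ℝ^n × ℝ^d → ℝ^m such that every pushforward G^ε(y,·)_#P_Z has finite first moment, such that there is a constant L < ∞ with W₁(G^ε(y₁,·)_#P_Z,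 G^ε(y₂,·)_#P_Z) ≤ L‖y₁ − y₂‖ for all ε > 0 and all y₁, y₂ ∈ ℝ^n, and such that for every ε > 0 the function y ↦ W₁(μ_y, G^ε(y,·)_#P_Z) is measurable with ∫ W₁(μ_y, G^ε(y,·)_#P_Z) dP_Y(y) ≤ ε. Then for every y ∈ ℝ^n with p_Y(y) > 0, W₁(μ_y, G^ε(y,·)_#P_Z) → 0 as ε → 0. -/
open MeasureTheory Filter Topology Matrix

/-!
Fix `y₀` with `p_Y(y₀) > 0` and write `f_ε(y) = W₁(μ_y, G^ε(y,·)_#P_Z)`. Two applications of the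
triangle inequality for `W₁` (proved by gluing couplings along a disintegration) and the two
Lipschitz hypotheses give `f_ε(y₀) ≤ f_ε(y) + (C + L)‖y - y₀‖` near `y₀`, uniformly in `ε`. Hence
if `f_ε(y₀) ≥ δ`, then `f_ε ≥ δ/2` on a neighbourhood `U` of `y₀`, and `U` has positive `P_Y`-mass
because `p_Y` is continuous and positive at `y₀`; so `ε ≥ ∫ f_ε dP_Y ≥ (δ/2) P_Y(U)`, which fails
for small `ε`.
-/

open ProbabilityTheory
open scoped ENNReal

namespace MeasureTheory.Measure

variable {X Y Z : Type*} [MeasurableSpace X] [MeasurableSpace Y] [MeasurableSpace Z]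
  [StandardBorelSpace X] [Nonempty X] [StandardBorelSpace Z] [Nonempty Z]

theorem exists_gluing (π₁ : Measure (X × Y)) (π₂ : Measure (Y × Z))
    [IsProbabilityMeasure π₁] [IsProbabilityMeasure π₂] (h : π₁.snd = π₂.fst) :
    ∃ τ : Measure (Y × X × Z), IsProbabilityMeasure τ ∧
      τ.map (fun p => (p.2.1, p.1)) = π₁ ∧ τ.map (fun p => (p.1, p.2.2)) = π₂ := by
  set ρ := π₁.map Prod.swap
  have hρ : π₂.fst ⊗ₘ ρ.condKernel = ρ := by
    rw [← h, ← fst_map_swap]; exact ρ.disintegrate _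
  refine ⟨π₂.fst ⊗ₘ (ρ.condKernel ×ₖ π₂.condKernel), inferInstance, ?_, ?_⟩
  · have : (fun p : Y × X × Z => (p.2.1, p.1)) = Prod.swap ∘ Prod.map id Prod.fst := rfl
    rw [this, ← map_map measurable_swap (by fun_prop), ← compProd_map measurable_fst,
      ← Kernel.fst_eq, Kernel.fst_prod, hρ, map_map measurable_swap measurable_swap,
      Prod.swap_swap_eq, map_id]
  · rw [show (fun p : Y × X × Z => (p.1, p.2.2)) = Prod.map id Prod.snd from rfl,
      ← compProd_map measurable_snd, ← Kernel.snd_eq, Kernel.snd_prod, π₂.disintegrate]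

end MeasureTheory.Measure

section Wasserstein

def couplings {E : Type*} [MeasurableSpace E] (μ ν : Measure E) : Set (Measure (E × E)) :=
  {π | π.map Prod.fst = μ ∧ π.map Prod.snd = ν ∧ IsProbabilityMeasure π}

theorem prod_mem_couplings {E : Type*} [MeasurableSpace E] (μ ν : Measure E)
    [IsProbabilityMeasure μ] [IsProbabilityMeasure ν] : μ.prod ν ∈ couplings μ ν :=
  ⟨Measure.map_fst_prod.trans (by simp), Measure.map_snd_prod.trans (by simp), inferInstance⟩

variable {E : Type*} [NormedAddCommGroup E] [MeasurableSpace E]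

noncomputable def transportCost (μ ν : Measure E) : ℝ≥0∞ :=
  ⨅ π ∈ couplings μ ν, ∫⁻ p, ‖p.1 - p.2‖ₑ ∂π

theorem W1_eq_toReal_transportCost (μ ν : Measure E) :
    W1 μ ν = (transportCost μ ν).toReal := rfl

theorem W1_nonneg (μ ν : Measure E) : 0 ≤ W1 μ ν := ENNReal.toReal_nonneg

variable [BorelSpace E] [SecondCountableTopology E]

theorem transportCost_ne_top {μ ν : Measure E} [IsProbabilityMeasure μ] [IsProbabilityMeasure ν]
    (hμ : HasFiniteFirstMoment μ) (hν : HasFiniteFirstMoment ν) : transportCost μ ν ≠ ⊤ := by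
  refine ne_top_of_le_ne_top (ENNReal.add_ne_top.2 ⟨hμ, hν⟩)
    ((biInf_le _ (prod_mem_couplings μ ν)).trans ?_)
  calc ∫⁻ p, ‖p.1 - p.2‖ₑ ∂μ.prod ν ≤ ∫⁻ p, ‖p.1‖ₑ + ‖p.2‖ₑ ∂μ.prod ν :=
        lintegral_mono fun p => enorm_sub_le
    _ = ∫⁻ x, ‖x‖ₑ ∂(μ.prod ν).map Prod.fst + ∫⁻ y, ‖y‖ₑ ∂(μ.prod ν).map Prod.snd := by
        rw [lintegral_add_left (by fun_prop), lintegral_map, lintegral_map] <;> fun_prop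
    _ = ∫⁻ x, ‖x‖ₑ ∂μ + ∫⁻ y, ‖y‖ₑ ∂ν := by
        rw [(prod_mem_couplings μ ν).1, (prod_mem_couplings μ ν).2.1]

theorem transportCost_triangle [CompleteSpace E] (μ₁ μ₂ μ₃ : Measure E) :
    transportCost μ₁ μ₃ ≤ transportCost μ₁ μ₂ + transportCost μ₂ μ₃ := by
  refine ENNReal.le_iInf₂_add_iInf₂ fun π₁ ⟨hπ₁fst, hπ₁snd, _⟩ π₂ ⟨hπ₂fst, hπ₂snd, _⟩ => ?_
  obtain ⟨τ, _, hτ₁, hτ₂⟩ := Measure.exists_gluing π₁ π₂ (hπ₁snd.trans hπ₂fst.symm)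
  have hπ : τ.map Prod.snd ∈ couplings μ₁ μ₃ := by
    refine ⟨?_, ?_, Measure.isProbabilityMeasure_map (by fun_prop)⟩
    · rw [← hπ₁fst, ← hτ₁, Measure.map_map, Measure.map_map] <;> first | rfl | fun_prop
    · rw [← hπ₂snd, ← hτ₂, Measure.map_map, Measure.map_map] <;> first | rfl | fun_prop
  calc transportCost μ₁ μ₃ ≤ ∫⁻ p, ‖p.1 - p.2‖ₑ ∂τ.map Prod.snd := biInf_le _ hπ
    _ = ∫⁻ p, ‖p.2.1 - p.2.2‖ₑ ∂τ := lintegral_map (by fun_prop) measurable_snd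
    _ ≤ ∫⁻ p, ‖p.2.1 - p.1‖ₑ + ‖p.1 - p.2.2‖ₑ ∂τ :=
        lintegral_mono fun p => by
          simpa only [edist_eq_enorm_sub] using edist_triangle p.2.1 p.1 p.2.2
    _ = ∫⁻ p, ‖p.1 - p.2‖ₑ ∂π₁ + ∫⁻ p, ‖p.1 - p.2‖ₑ ∂π₂ := by
        rw [lintegral_add_left (by fun_prop), ← hτ₁, ← hτ₂, lintegral_map, lintegral_map] <;>
          fun_prop

-- `W1` sends an infinite cost to `0`, hence the moment hypotheses.
theorem W1_triangle_s9 [CompleteSpace E] {μ₁ μ₂ μ₃ : Measure E} [IsProbabilityMeasure μ₁]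
    [IsProbabilityMeasure μ₂] [IsProbabilityMeasure μ₃] (h₁ : HasFiniteFirstMoment μ₁)
    (h₂ : HasFiniteFirstMoment μ₂) (h₃ : HasFiniteFirstMoment μ₃) :
    W1 μ₁ μ₃ ≤ W1 μ₁ μ₂ + W1 μ₂ μ₃ := by
  have h₁₂ := transportCost_ne_top h₁ h₂
  have h₂₃ := transportCost_ne_top h₂ h₃
  simp only [W1_eq_toReal_transportCost]
  rw [← ENNReal.toReal_add h₁₂ h₂₃]
  exact ENNReal.toReal_mono (ENNReal.add_ne_top.2 ⟨h₁₂, h₂₃⟩) (transportCost_triangle μ₁ μ₂ μ₃)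

end Wasserstein

theorem mem_measSupport_withDensity {X : Type*} [TopologicalSpace X] [MeasurableSpace X]
    [OpensMeasurableSpace X] {μ : Measure X} [μ.IsOpenPosMeasure] {f : X → ℝ≥0∞} {x : X}
    (hf : ContinuousAt f x) (hx : f x ≠ 0) : x ∈ measSupport (μ.withDensity f) := by
  intro U hU hxU
  obtain ⟨c, hc, hcf⟩ := exists_between (pos_iff_ne_zero.2 hx)
  set V := interior (U ∩ {y | c < f y})
  have hxV : x ∈ V :=
    mem_interior_iff_mem_nhds.2 (Filter.inter_mem (hU.mem_nhds hxU) (hf (Ioi_mem_nhds hcf)))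
  calc 0 < c * μ V := ENNReal.mul_pos hc.ne' (isOpen_interior.measure_pos μ ⟨x, hxV⟩).ne'
    _ = ∫⁻ _ in V, c ∂μ := (setLIntegral_const _ _).symm
    _ ≤ ∫⁻ y in V, f y ∂μ :=
        setLIntegral_mono' isOpen_interior.measurableSet fun y hy => (interior_subset hy).2.le
    _ ≤ μ.withDensity f V := withDensity_apply_le f V
    _ ≤ μ.withDensity f U := measure_mono (interior_subset.trans Set.inter_subset_left)

theorem tendsto_zero_of_lintegral_le_of_mem_measSupport {Y : Type*} [TopologicalSpace Y]
    [MeasurableSpace Y] [OpensMeasurableSpace Y] {P : Measure Y} {f : ℝ → Y → ℝ} {g : Y → ℝ}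
    {y₀ : Y} (hy₀ : y₀ ∈ measSupport P) (hg : Tendsto g (𝓝 y₀) (𝓝 0))
    (hfg : ∀ᶠ y in 𝓝 y₀, ∀ ε > 0, f ε y₀ ≤ f ε y + g y) (hf₀ : ∀ ε > 0, 0 ≤ f ε y₀)
    (hint : ∀ ε > 0, ∫⁻ y, ENNReal.ofReal (f ε y) ∂P ≤ ENNReal.ofReal ε) :
    Tendsto (fun ε => f ε y₀) (𝓝[>] 0) (𝓝 0) := by
  refine tendsto_order.2 ⟨fun a ha => ?_, fun δ hδ => ?_⟩
  · filter_upwards [self_mem_nhdsWithin] with ε hε using ha.trans_le (hf₀ ε hε)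
  obtain ⟨U, hUsub, hU, hy₀U⟩ :=
    eventually_nhds_iff.1 (hfg.and (hg (Iio_mem_nhds (half_pos hδ))))
  set b := ENNReal.ofReal (δ / 2) * P U
  have hb : 0 < b := ENNReal.mul_pos (by simpa using hδ) (hy₀ U hU hy₀U).ne'
  have hsmall : ∀ᶠ ε in 𝓝[>] (0 : ℝ), ENNReal.ofReal ε < b :=
    (ENNReal.continuous_ofReal.tendsto' 0 0 ENNReal.ofReal_zero).mono_left nhdsWithin_le_nhds
      (Iio_mem_nhds hb)
  filter_upwards [hsmall, self_mem_nhdsWithin] with ε hεb hε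
  by_contra! hδε
  refine hεb.not_ge ?_
  calc b = ∫⁻ _ in U, ENNReal.ofReal (δ / 2) ∂P := (setLIntegral_const _ _).symm
    _ ≤ ∫⁻ y in U, ENNReal.ofReal (f ε y) ∂P := setLIntegral_mono' hU.measurableSet fun y hy =>
        ENNReal.ofReal_le_ofReal (by linarith [(hUsub y hy).1 ε hε, Set.mem_Iio.1 (hUsub y hy).2])
    _ ≤ ∫⁻ y, ENNReal.ofReal (f ε y) ∂P := setLIntegral_le_lintegral _ _
    _ ≤ ENNReal.ofReal ε := hint ε hε

theorem stmt_9_general {n m d : ℕ}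
    (pY : EuclideanSpace ℝ (Fin n) → ℝ)
    (PY : Measure (EuclideanSpace ℝ (Fin n)))
    (hPY : PY = volume.withDensity (fun y => ENNReal.ofReal (pY y)))
    (DY : EuclideanSpace ℝ (Fin n) → (EuclideanSpace ℝ (Fin n) →L[ℝ] ℝ))
    (hderivY : ∀ y, HasFDerivAt pY (DY y) y)
    (μ : EuclideanSpace ℝ (Fin n) → Measure (EuclideanSpace ℝ (Fin m)))
    (hμprob : ∀ y, IsProbabilityMeasure (μ y))
    (hμmom : ∀ y, HasFiniteFirstMoment (μ y))
    (hμlip : ∀ r > (0 : ℝ), ∃ C : ℝ, ∀ y₁ y₂ : EuclideanSpace ℝ (Fin n),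
      ‖y₁‖ ≤ r → ‖y₂‖ ≤ r → W1 (μ y₁) (μ y₂) ≤ C * ‖y₁ - y₂‖)
    (PZ : Measure (EuclideanSpace ℝ (Fin d))) (hPZprob : IsProbabilityMeasure PZ)
    (Gf : ℝ → EuclideanSpace ℝ (Fin n) → EuclideanSpace ℝ (Fin d) → EuclideanSpace ℝ (Fin m))
    (hGmeas : ∀ ε > (0 : ℝ), ∀ y : EuclideanSpace ℝ (Fin n), Measurable (Gf ε y))
    (hGmom : ∀ ε > (0 : ℝ), ∀ y : EuclideanSpace ℝ (Fin n),
      HasFiniteFirstMoment (PZ.map (Gf ε y)))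
    (L : ℝ)
    (hGlip : ∀ ε > (0 : ℝ), ∀ y₁ y₂ : EuclideanSpace ℝ (Fin n),
      W1 (PZ.map (Gf ε y₁)) (PZ.map (Gf ε y₂)) ≤ L * ‖y₁ - y₂‖)
    (hint : ∀ ε > (0 : ℝ),
      ∫⁻ y, ENNReal.ofReal (W1 (μ y) (PZ.map (Gf ε y))) ∂PY ≤ ENNReal.ofReal ε) :
    ∀ y : EuclideanSpace ℝ (Fin n), 0 < pY y →
      Tendsto (fun ε => W1 (μ y) (PZ.map (Gf ε y))) (𝓝[>] (0 : ℝ)) (𝓝 0) := by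
  intro y₀ hy₀
  have hsupp : y₀ ∈ measSupport PY := hPY ▸ mem_measSupport_withDensity
    (ENNReal.continuous_ofReal.continuousAt.comp (hderivY y₀).continuousAt) (by simpa using hy₀)
  obtain ⟨C, hC⟩ := hμlip (‖y₀‖ + 1) (by positivity)
  refine tendsto_zero_of_lintegral_le_of_mem_measSupport hsupp (g := fun y => (C + L) * ‖y - y₀‖)
    ((by fun_prop : Continuous fun y => (C + L) * ‖y - y₀‖).tendsto' y₀ 0 (by simp))
    ?_ (fun _ _ => W1_nonneg _ _) hint
  filter_upwards [Metric.ball_mem_nhds y₀ one_pos] with y hy_ball ε hε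
  have hy : ‖y‖ ≤ ‖y₀‖ + 1 := by
    have := mem_ball_iff_norm.1 hy_ball
    linarith [norm_le_norm_add_norm_sub' y y₀]
  have hν : ∀ y, IsProbabilityMeasure (PZ.map (Gf ε y)) :=
    fun y => Measure.isProbabilityMeasure_map (hGmeas ε hε y).aemeasurable
  calc W1 (μ y₀) (PZ.map (Gf ε y₀))
      ≤ W1 (μ y₀) (μ y) + (W1 (μ y) (PZ.map (Gf ε y)) + W1 (PZ.map (Gf ε y)) (PZ.map (Gf ε y₀))) :=
        (W1_triangle_s9 (hμmom y₀) (hμmom y) (hGmom ε hε y₀)).trans (add_le_add le_rfl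
          (W1_triangle_s9 (hμmom y) (hGmom ε hε y) (hGmom ε hε y₀)))
    _ ≤ C * ‖y₀ - y‖ + (W1 (μ y) (PZ.map (Gf ε y)) + L * ‖y - y₀‖) := by
        gcongr
        · exact hC y₀ y (by linarith) hy
        · exact hGlip ε hε y y₀
    _ = W1 (μ y) (PZ.map (Gf ε y)) + (C + L) * ‖y - y₀‖ := by rw [norm_sub_rev]; ring

/-- a perfectly learned family of generative models recovers every
posterior with positive evidence. -/
theorem stmt_9 {n m d : ℕ} (hn : 1 ≤ n)
    (pY : EuclideanSpace ℝ (Fin n) → ℝ)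
    (PY : Measure (EuclideanSpace ℝ (Fin n)))
    (hPYprob : IsProbabilityMeasure PY)
    (hPY : PY = volume.withDensity (fun y => ENNReal.ofReal (pY y)))
    (K : ℝ) (hK : 0 < K)
    (DY : EuclideanSpace ℝ (Fin n) → (EuclideanSpace ℝ (Fin n) →L[ℝ] ℝ))
    (hderivY : ∀ y, HasFDerivAt pY (DY y) y)
    (hDYbound : ∀ y, ‖DY y‖ ≤ K)
    (μ : EuclideanSpace ℝ (Fin n) → Measure (EuclideanSpace ℝ (Fin m)))
    (hμprob : ∀ y, IsProbabilityMeasure (μ y))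
    (hμmom : ∀ y, HasFiniteFirstMoment (μ y))
    (hμlip : ∀ r > (0 : ℝ), ∃ C : ℝ, ∀ y₁ y₂ : EuclideanSpace ℝ (Fin n),
      ‖y₁‖ ≤ r → ‖y₂‖ ≤ r → W1 (μ y₁) (μ y₂) ≤ C * ‖y₁ - y₂‖)
    (PZ : Measure (EuclideanSpace ℝ (Fin d))) (hPZprob : IsProbabilityMeasure PZ)
    (Gf : ℝ → EuclideanSpace ℝ (Fin n) → EuclideanSpace ℝ (Fin d) → EuclideanSpace ℝ (Fin m))
    (hGmeas : ∀ ε > (0 : ℝ), ∀ y : EuclideanSpace ℝ (Fin n), Measurable (Gf ε y))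
    (hGmom : ∀ ε > (0 : ℝ), ∀ y : EuclideanSpace ℝ (Fin n),
      HasFiniteFirstMoment (PZ.map (Gf ε y)))
    (L : ℝ)
    (hGlip : ∀ ε > (0 : ℝ), ∀ y₁ y₂ : EuclideanSpace ℝ (Fin n),
      W1 (PZ.map (Gf ε y₁)) (PZ.map (Gf ε y₂)) ≤ L * ‖y₁ - y₂‖)
    (hWmeas : ∀ ε > (0 : ℝ), Measurable fun y => W1 (μ y) (PZ.map (Gf ε y)))
    (hint : ∀ ε > (0 : ℝ),
      ∫⁻ y, ENNReal.ofReal (W1 (μ y) (PZ.map (Gf ε y))) ∂PY ≤ ENNReal.ofReal ε) :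
    ∀ y : EuclideanSpace ℝ (Fin n), 0 < pY y →
      Tendsto (fun ε => W1 (μ y) (PZ.map (Gf ε y))) (𝓝[>] (0 : ℝ)) (𝓝 0) :=
  stmt_9_general pY PY hPY DY hderivY μ hμprob hμmom hμlip PZ hPZprob Gf hGmeas hGmom L hGlip hint
end
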